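/- arXiv:1807.09658 — 5 statements merged into one kernel-verified Lean document; each statement's English description precedes it below -/
import Mathlib

section
/- Let m be a positive even integer, let η ≥ 0, β ≠ 0, τ ≥ 0 be real numbers, let 1 < α ≤ 2, let a < b be real numbers, and set μ_k = 2πk/(b − a) for integers k. Given ψ : {0,…,m−1} → ℂ with discrete Fourier transform ψ̂_k = Σ_{j=0}^{m−1} ψ_j · exp(−2πi·k·j/m), define ψ**_j = (1/m) · Σ_{k=−m/2}^{m/2−1} exp(−((η + iβ)/(η² + β²))·|μ_k|^α·τ) · ψ̂_k · exp(2πi·k·j/m). Then Σ_{j=0}^{m−1} |ψ**_j|² ≤ Σ_{j=0}^{m−1} |ψ_j|². -/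
/-!
The modes `-m/2, …, m/2 - 1` form a complete residue system mod `m`, so orthogonality of the
characters of `ℤ/mℤ` gives Plancherel identities for both the forward and the inverse transform.
Hence the step multiplies `∑ |ψ_j|²` by at most the largest squared modulus of a multiplier, and
each multiplier has modulus `exp(-η |μ_k|^α τ / (η² + β²)) ≤ 1` because `η, τ ≥ 0`.
-/

open Complex Finset ComplexConjugate

namespace AddChar

variable {R : Type*} [CommRing R] [Fintype R] {ψ : AddChar R ℂ} {ι κ : Type*}

lemma sum_apply_mul_eq_ite [DecidableEq R] (hψ : ψ.IsPrimitive) {s : Finset ι} {p : ι → R}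
    (hp : Set.BijOn p s Set.univ) (d : R) :
    ∑ x ∈ s, ψ (p x * d) = if d = 0 then (Fintype.card R : ℂ) else 0 := by
  have hsum := sum_mulShift d hψ
  rw [Nat.cast_ite, Nat.cast_zero] at hsum
  rw [← hsum]
  exact sum_nbij p (fun _ _ => mem_univ _) hp.injOn (by simpa using hp.surjOn) fun _ _ => rfl

theorem sum_norm_sq_sum_mul_apply_mul (hψ : ψ.IsPrimitive) {s : Finset ι} {t : Finset κ}
    {p : ι → R} {q : κ → R} (hp : Set.BijOn p s Set.univ) (hq : Set.InjOn q t) (f : κ → ℂ) :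
    ∑ x ∈ s, ‖∑ y ∈ t, f y * ψ (p x * q y)‖ ^ 2 = Fintype.card R * ∑ y ∈ t, ‖f y‖ ^ 2 := by
  classical
  apply Complex.ofReal_injective
  push_cast
  simp_rw [← Complex.mul_conj']
  calc ∑ x ∈ s, (∑ y ∈ t, f y * ψ (p x * q y)) * conj (∑ y ∈ t, f y * ψ (p x * q y))
      = ∑ x ∈ s, ∑ y ∈ t, ∑ y' ∈ t, f y * conj (f y') * ψ (p x * (q y - q y')) := by
        simp only [map_sum, map_mul, sum_mul_sum, mul_mul_mul_comm _ (ψ _),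
          ← map_neg_eq_conj, ← map_add_eq_mul, sub_eq_add_neg, mul_add, mul_neg]
    _ = ∑ y ∈ t, ∑ y' ∈ t, f y * conj (f y') * ∑ x ∈ s, ψ (p x * (q y - q y')) := by
        rw [sum_comm]
        refine sum_congr rfl fun y _ => ?_
        rw [sum_comm]
        simp only [mul_sum]
    _ = ∑ y ∈ t, f y * conj (f y) * Fintype.card R := by
        refine sum_congr rfl fun y hy => ?_
        simp only [sum_apply_mul_eq_ite hψ hp, sub_eq_zero]
        rw [sum_eq_single_of_mem y hy fun y' hy' hne => by
          rw [if_neg fun h => hne (hq hy' hy h.symm), mul_zero], if_pos rfl]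
    _ = Fintype.card R * ∑ y ∈ t, f y * conj (f y) := by
        rw [mul_sum]
        exact sum_congr rfl fun _ _ => mul_comm _ _

end AddChar

namespace ZMod

variable {N : ℕ} [NeZero N]

lemma stdAddChar_intCast_mul_natCast (k : ℤ) (j : ℕ) :
    stdAddChar ((k : ZMod N) * (j : ZMod N)) = exp (2 * Real.pi * I * k * j / N) := by
  have h := stdAddChar_coe (N := N) (k * j)
  push_cast at h
  rw [h, mul_assoc _ (k : ℂ)]

lemma bijOn_natCast_range : Set.BijOn (Nat.cast : ℕ → ZMod N) (range N) Set.univ := by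
  refine ⟨fun _ _ => Set.mem_univ _, fun i hi j hj hij => ?_, fun x _ => ⟨x.val, ?_, ?_⟩⟩
  · simp only [coe_range, Set.mem_Iio] at hi hj
    rwa [natCast_eq_natCast_iff', Nat.mod_eq_of_lt hi, Nat.mod_eq_of_lt hj] at hij
  · simpa using val_lt x
  · simp

lemma bijOn_intCast_Icc (c : ℤ) :
    Set.BijOn (Int.cast : ℤ → ZMod N) (Icc c (c + N - 1)) Set.univ := by
  refine ⟨fun _ _ => Set.mem_univ _, fun i hi j hj hij => ?_,
    fun x _ => ⟨c + (x - (c : ZMod N)).val, ?_, ?_⟩⟩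
  · simp only [coe_Icc, Set.mem_Icc] at hi hj
    rw [intCast_eq_intCast_iff_dvd_sub] at hij
    have := Int.eq_zero_of_abs_lt_dvd hij (by rw [abs_lt]; omega)
    omega
  · have := val_lt (x - (c : ZMod N))
    simp only [coe_Icc, Set.mem_Icc]
    omega
  · simp

theorem sum_Icc_norm_sq_dft (c : ℤ) (ψ : ℕ → ℂ) :
    ∑ k ∈ Icc c (c + N - 1),
        ‖∑ j ∈ range N, ψ j * exp (-(2 * Real.pi * I * k * j) / N)‖ ^ 2
      = N * ∑ j ∈ range N, ‖ψ j‖ ^ 2 := by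
  have hexp (k : ℤ) (j : ℕ) :
      exp (-(2 * Real.pi * I * k * j) / N) = stdAddChar (-(k : ZMod N) * (j : ZMod N)) := by
    rw [← Int.cast_neg, stdAddChar_intCast_mul_natCast]
    push_cast
    ring_nf
  simp only [hexp]
  simpa using AddChar.sum_norm_sq_sum_mul_apply_mul (isPrimitive_stdAddChar N)
    (neg_bijective.bijOn_univ.comp (bijOn_intCast_Icc c)) bijOn_natCast_range.injOn ψ

theorem sum_range_norm_sq_idft (c : ℤ) (g : ℤ → ℂ) :
    ∑ j ∈ range N, ‖∑ k ∈ Icc c (c + N - 1), g k * exp (2 * Real.pi * I * k * j / N)‖ ^ 2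
      = N * ∑ k ∈ Icc c (c + N - 1), ‖g k‖ ^ 2 := by
  simp only [← stdAddChar_intCast_mul_natCast, mul_comm (_ : ZMod N) (Nat.cast _)]
  simpa using AddChar.sum_norm_sq_sum_mul_apply_mul (isPrimitive_stdAddChar N)
    bijOn_natCast_range (bijOn_intCast_Icc c).injOn g

end ZMod

noncomputable def tsfsMultiplier (η β α τ x : ℝ) : ℂ :=
  exp (-(((η : ℂ) + β * I) / ((η : ℂ) ^ 2 + (β : ℂ) ^ 2) * ((|x| ^ α : ℝ) : ℂ) * τ))

lemma norm_tsfsMultiplier_le_one {η τ : ℝ} (hη : 0 ≤ η) (hτ : 0 ≤ τ) (β α x : ℝ) :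
    ‖tsfsMultiplier η β α τ x‖ ≤ 1 := by
  have hden : (η : ℂ) ^ 2 + (β : ℂ) ^ 2 = ((η ^ 2 + β ^ 2 : ℝ) : ℂ) := by push_cast; ring
  rw [tsfsMultiplier, norm_exp, Real.exp_le_one_iff, neg_re, neg_nonpos, re_mul_ofReal,
    re_mul_ofReal, hden, div_ofReal_re, add_re, ofReal_re, mul_I_re, ofReal_im, neg_zero, add_zero]
  positivity

theorem tsfs_fourier_step_l2_contractive_general
    (m : ℕ)
    (η β τ α : ℝ) (hη : 0 ≤ η) (hτ : 0 ≤ τ)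
    (μ : ℤ → ℝ)
    (ψ : ℕ → ℂ) (ψhat : ℤ → ℂ)
    (hhat : ∀ k : ℤ, ψhat k =
      ∑ j ∈ Finset.range m, ψ j *
        Complex.exp (-(2 * (Real.pi : ℂ) * Complex.I * (k : ℂ) * (j : ℂ)) / (m : ℂ)))
    (ψss : ℕ → ℂ)
    (hss : ∀ j : ℕ, ψss j = (1 / (m : ℂ)) *
      ∑ k ∈ Finset.Icc (-(m : ℤ) / 2) ((m : ℤ) / 2 - 1),
        Complex.exp (-((((η : ℂ) + (β : ℂ) * Complex.I) / ((η : ℂ) ^ 2 + (β : ℂ) ^ 2)) *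
            ((|μ k| ^ α : ℝ) : ℂ) * (τ : ℂ))) *
          ψhat k * Complex.exp (2 * (Real.pi : ℂ) * Complex.I * (k : ℂ) * (j : ℂ) / (m : ℂ))) :
    ∑ j ∈ Finset.range m, ‖ψss j‖ ^ 2
      ≤ ∑ j ∈ Finset.range m, ‖ψ j‖ ^ 2 := by
  rcases Nat.eq_zero_or_pos m with rfl | hm
  · simp
  have : NeZero m := ⟨hm.ne'⟩
  rw [show (m : ℤ) / 2 - 1 = -(m : ℤ) / 2 + m - 1 by omega] at hss
  generalize -(m : ℤ) / 2 = c at hss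
  calc ∑ j ∈ range m, ‖ψss j‖ ^ 2
      = (m : ℝ)⁻¹ ^ 2 * ∑ j ∈ range m,
          ‖∑ k ∈ Icc c (c + m - 1),
            tsfsMultiplier η β α τ (μ k) * ψhat k * exp (2 * Real.pi * I * k * j / m)‖ ^ 2 := by
        rw [mul_sum]
        refine sum_congr rfl fun j _ => ?_
        rw [hss, norm_mul, mul_pow, one_div, norm_inv, Complex.norm_natCast]
        rfl
    _ = (m : ℝ)⁻¹ * ∑ k ∈ Icc c (c + m - 1), ‖tsfsMultiplier η β α τ (μ k) * ψhat k‖ ^ 2 := by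
        rw [ZMod.sum_range_norm_sq_idft]
        field_simp
    _ ≤ (m : ℝ)⁻¹ * ∑ k ∈ Icc c (c + m - 1), ‖ψhat k‖ ^ 2 := by
        gcongr with k
        rw [norm_mul]
        exact mul_le_of_le_one_left (norm_nonneg _) (norm_tsfsMultiplier_le_one hη hτ β α (μ k))
    _ = ∑ j ∈ range m, ‖ψ j‖ ^ 2 := by
        simp only [hhat]
        rw [ZMod.sum_Icc_norm_sq_dft]
        field_simp

/-- **ℓ²-contractivity of the Fourier-multiplier step of the TSFS scheme.**
With `μ_k = 2πk/(b−a)` and each Fourier mode multiplied by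
`exp(−((η+iβ)/(η²+β²))·|μ_k|^α·τ)`, the discrete ℓ²-norm does not increase. -/
theorem tsfs_fourier_step_l2_contractive
    (m : ℕ) (hm : 0 < m) (hme : Even m)
    (η β τ α a b : ℝ) (hη : 0 ≤ η) (hβ : β ≠ 0) (hτ : 0 ≤ τ)
    (hα1 : 1 < α) (hα2 : α ≤ 2) (hab : a < b)
    (μ : ℤ → ℝ) (hμ : ∀ k : ℤ, μ k = 2 * Real.pi * (k : ℝ) / (b - a))
    (ψ : ℕ → ℂ) (ψhat : ℤ → ℂ)
    (hhat : ∀ k : ℤ, ψhat k =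
      ∑ j ∈ Finset.range m, ψ j *
        Complex.exp (-(2 * (Real.pi : ℂ) * Complex.I * (k : ℂ) * (j : ℂ)) / (m : ℂ)))
    (ψss : ℕ → ℂ)
    (hss : ∀ j : ℕ, ψss j = (1 / (m : ℂ)) *
      ∑ k ∈ Finset.Icc (-(m : ℤ) / 2) ((m : ℤ) / 2 - 1),
        Complex.exp (-((((η : ℂ) + (β : ℂ) * Complex.I) / ((η : ℂ) ^ 2 + (β : ℂ) ^ 2)) *
            ((|μ k| ^ α : ℝ) : ℂ) * (τ : ℂ))) *
          ψhat k * Complex.exp (2 * (Real.pi : ℂ) * Complex.I * (k : ℂ) * (j : ℂ) / (m : ℂ))) :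
    ∑ j ∈ Finset.range m, ‖ψss j‖ ^ 2
      ≤ ∑ j ∈ Finset.range m, ‖ψ j‖ ^ 2 :=
  tsfs_fourier_step_l2_contractive_general m η β τ α hη hτ μ ψ ψhat hhat ψss hss
end

section
/- Let m be a positive even integer, let β ≠ 0 and τ be real numbers, let 1 < α ≤ 2, let a < b be real numbers, and set μ_k = 2πk/(b − a). Let θ, θ′ : {0,…,m−1} → ℝ be arbitrary real phase functions. Given ψ : {0,…,m−1} → ℂ, define the Strang-split step: ψ*_j = exp(i·θ_j)·ψ_j; ψ̂*_k = Σ_{j=0}^{m−1} ψ*_j · exp(−2πi·k·j/m) for k = −m/2,…,m/2−1; ψ**_j = (1/m) · Σ_{k=−m/2}^{m/2−1} exp(−(i/β)·|μ_k|^α·τ) · ψ̂*_k · exp(2πi·k·j/m); and ψ^{new}_j = exp(i·θ′_j)·ψ**_j. Then Σ_{j=0}^{m−1} |ψ^{new}_j|² = Σ_{j=0}^{m−1} |ψ_j|². -/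
/-!
Both nonlinear half-steps multiply pointwise by unimodular factors `exp (i θ_j)`, so only the
linear step needs an argument. With `ζ = exp (2πi / m)` it reads `ψ ↦ m⁻¹ · F⁻(g · F ψ)`, where
`F ψ (k) = ∑ⱼ ψ j ζ^(-k j)`, `F⁻ φ (j) = ∑ₖ φ k ζ^(k j)` and `‖g k‖ = 1`. The frequency window
`Icc (-m/2) (m/2 - 1)` is a complete residue system mod `m`, so the characters `j ↦ ζ^(k j)` are
orthogonal in both variables, and Parseval gives `‖F ψ‖² = m ‖ψ‖²` and `‖F⁻ φ‖² = m ‖φ‖²`.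
-/

open Finset ComplexConjugate

theorem Int.sum_Ico_add_natCast_eq_sum_range {M : Type*} [AddCommMonoid M] (f : ℤ → M) (c : ℤ)
    (m : ℕ) : ∑ k ∈ Ico c (c + m), f k = ∑ t ∈ Finset.range m, f (c + t) := by
  simp [Int.Ico_eq_finset_map]

theorem Int.eq_of_mem_Ico_of_dvd_sub {m : ℕ} {c k k' : ℤ} (hk : k ∈ Ico c (c + m))
    (hk' : k' ∈ Ico c (c + m)) (h : (m : ℤ) ∣ k - k') : k = k' := by
  rw [mem_Ico] at hk hk'
  exact sub_eq_zero.1 (Int.eq_zero_of_dvd_of_natAbs_lt_natAbs h (by omega))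

theorem sum_norm_sq_sum_mul_of_orthogonal {ι κ : Type*} [DecidableEq ι] (K : Finset ι)
    (J : Finset κ) (A : ι → ℂ) (E : ι → κ → ℂ) (c : ℝ)
    (horth : ∀ k ∈ K, ∀ k' ∈ K,
      ∑ j ∈ J, E k j * conj (E k' j) = if k = k' then (c : ℂ) else 0) :
    ∑ j ∈ J, ‖∑ k ∈ K, A k * E k j‖ ^ 2 = c * ∑ k ∈ K, ‖A k‖ ^ 2 := by
  apply Complex.ofReal_injective
  push_cast
  simp only [← Complex.mul_conj']
  calc ∑ j ∈ J, (∑ k ∈ K, A k * E k j) * conj (∑ k ∈ K, A k * E k j)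
      = ∑ j ∈ J, ∑ k ∈ K, ∑ k' ∈ K, A k * conj (A k') * (E k j * conj (E k' j)) := by
        refine sum_congr rfl fun j _ => ?_
        rw [map_sum, sum_mul_sum]
        refine sum_congr rfl fun k _ => sum_congr rfl fun k' _ => ?_
        rw [map_mul]
        ring
    _ = ∑ k ∈ K, ∑ k' ∈ K, A k * conj (A k') * ∑ j ∈ J, E k j * conj (E k' j) := by
        simp_rw [mul_sum]
        rw [sum_comm]
        exact sum_congr rfl fun k _ => sum_comm
    _ = ∑ k ∈ K, A k * conj (A k) * c := by
        refine sum_congr rfl fun k hk => ?_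
        rw [sum_congr rfl fun k' hk' => congrArg _ (horth k hk k' hk')]
        simp only [mul_ite, mul_zero, sum_ite_eq, if_pos hk]
    _ = c * ∑ k ∈ K, A k * conj (A k) := by rw [← sum_mul, mul_comm]

namespace IsPrimitiveRoot

section Field

variable {F : Type*} [Field F] {ζ : F} {m : ℕ}

theorem sum_range_zpow_mul (hζ : IsPrimitiveRoot ζ m) (d : ℤ) :
    ∑ t ∈ range m, ζ ^ (d * t) = if (m : ℤ) ∣ d then (m : F) else 0 := by
  simp_rw [zpow_mul, zpow_natCast]
  split_ifs with h
  · simp [(hζ.zpow_eq_one_iff_dvd d).2 h]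
  · rw [geom_sum_eq (mt (hζ.zpow_eq_one_iff_dvd d).1 h), ← zpow_natCast, ← zpow_mul, mul_comm,
      zpow_mul, hζ.zpow_eq_one, one_zpow, sub_self, zero_div]

theorem sum_Ico_zpow_mul (hζ : IsPrimitiveRoot ζ m) (hm : m ≠ 0) (c d : ℤ) :
    ∑ k ∈ Ico c (c + m), ζ ^ (d * k) = if (m : ℤ) ∣ d then (m : F) else 0 := by
  simp_rw [Int.sum_Ico_add_natCast_eq_sum_range, mul_add, zpow_add₀ (hζ.ne_zero hm), ← mul_sum,
    hζ.sum_range_zpow_mul]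
  split_ifs with h
  · rw [zpow_mul, (hζ.zpow_eq_one_iff_dvd d).2 h, one_zpow, one_mul]
  · rw [mul_zero]

end Field

variable {ζ : ℂ} {m : ℕ}

theorem conj_zpow (hζ : IsPrimitiveRoot ζ m) (hm : m ≠ 0) (n : ℤ) : conj (ζ ^ n) = ζ ^ (-n) := by
  rw [map_zpow₀, ← Complex.inv_eq_conj (hζ.norm'_eq_one hm), inv_zpow']

theorem sum_range_norm_sq_sum_Ico (hζ : IsPrimitiveRoot ζ m) (hm : m ≠ 0) (c : ℤ) (g : ℤ → ℂ) :
    ∑ j ∈ range m, ‖∑ k ∈ Ico c (c + m), g k * ζ ^ (k * j)‖ ^ 2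
      = m * ∑ k ∈ Ico c (c + m), ‖g k‖ ^ 2 := by
  refine sum_norm_sq_sum_mul_of_orthogonal _ _ _ _ _ fun k hk k' hk' => ?_
  simp_rw [hζ.conj_zpow hm, ← zpow_add₀ (hζ.ne_zero hm), ← neg_mul, ← add_mul, ← sub_eq_add_neg,
    hζ.sum_range_zpow_mul]
  congr 1
  exact propext ⟨Int.eq_of_mem_Ico_of_dvd_sub hk hk', fun h => by simp [h]⟩

theorem sum_Ico_norm_sq_sum_range (hζ : IsPrimitiveRoot ζ m) (hm : m ≠ 0) (c : ℤ) (f : ℕ → ℂ) :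
    ∑ k ∈ Ico c (c + m), ‖∑ j ∈ range m, f j * ζ ^ (-(k * j))‖ ^ 2
      = m * ∑ j ∈ range m, ‖f j‖ ^ 2 := by
  refine sum_norm_sq_sum_mul_of_orthogonal _ _ _ _ _ fun j hj j' hj' => ?_
  have hIco : ∀ i ∈ range m, (i : ℤ) ∈ Ico (0 : ℤ) (0 + m) := fun i hi => by
    simpa using mem_range.1 hi
  simp_rw [hζ.conj_zpow hm, ← zpow_add₀ (hζ.ne_zero hm), neg_neg, neg_mul_eq_mul_neg,
    ← mul_add, mul_comm _ (-(j : ℤ) + j'), hζ.sum_Ico_zpow_mul hm]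
  congr 1
  refine propext ⟨fun h => ?_, fun h => by simp [h]⟩
  rw [neg_add_eq_sub] at h
  exact_mod_cast (Int.eq_of_mem_Ico_of_dvd_sub (hIco j' hj') (hIco j hj) h).symm

theorem sum_norm_sq_fourierMultiplier (hζ : IsPrimitiveRoot ζ m) (hm : m ≠ 0)
    (c : ℤ) (g : ℤ → ℂ) (hg : ∀ k, ‖g k‖ = 1) (f : ℕ → ℂ) :
    ∑ j ∈ range m, ‖(1 / m : ℂ) * ∑ k ∈ Ico c (c + m),
        g k * (∑ i ∈ range m, f i * ζ ^ (-(k * i))) * ζ ^ (k * j)‖ ^ 2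
      = ∑ j ∈ range m, ‖f j‖ ^ 2 := by
  simp_rw [norm_mul, mul_pow, ← mul_sum, hζ.sum_range_norm_sq_sum_Ico hm, norm_mul, hg, one_mul,
    hζ.sum_Ico_norm_sq_sum_range hm]
  have hm' : (m : ℝ) ≠ 0 := Nat.cast_ne_zero.2 hm
  rw [one_div, norm_inv, Complex.norm_natCast]
  field_simp

end IsPrimitiveRoot

theorem tsfs_strang_step_l2_conservative_general
    (m : ℕ) (hm : 0 < m)
    (β τ α : ℝ)
    (μ : ℤ → ℝ)
    (θ θ' : ℕ → ℝ) (ψ ψstar ψss ψnew : ℕ → ℂ) (ψhatstar : ℤ → ℂ)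
    (hstar : ∀ j : ℕ, ψstar j = Complex.exp (Complex.I * (θ j : ℂ)) * ψ j)
    (hhatstar : ∀ k : ℤ, ψhatstar k =
      ∑ j ∈ Finset.range m, ψstar j *
        Complex.exp (-(2 * (Real.pi : ℂ) * Complex.I * (k : ℂ) * (j : ℂ)) / (m : ℂ)))
    (hss : ∀ j : ℕ, ψss j = (1 / (m : ℂ)) *
      ∑ k ∈ Finset.Icc (-(m : ℤ) / 2) ((m : ℤ) / 2 - 1),
        Complex.exp (-((Complex.I / (β : ℂ)) * ((|μ k| ^ α : ℝ) : ℂ) * (τ : ℂ))) *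
          ψhatstar k * Complex.exp (2 * (Real.pi : ℂ) * Complex.I * (k : ℂ) * (j : ℂ) / (m : ℂ)))
    (hnew : ∀ j : ℕ, ψnew j = Complex.exp (Complex.I * (θ' j : ℂ)) * ψss j) :
    ∑ j ∈ Finset.range m, ‖ψnew j‖ ^ 2
      = ∑ j ∈ Finset.range m, ‖ψ j‖ ^ 2 := by
  set ζ := Complex.exp (2 * Real.pi * Complex.I / m)
  have hK : Icc (-(m : ℤ) / 2) ((m : ℤ) / 2 - 1) = Ico (-(m : ℤ) / 2) (-(m : ℤ) / 2 + m) := by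
    ext k
    simp only [mem_Icc, mem_Ico]
    omega
  have hmode (k : ℤ) (j : ℕ) :
      Complex.exp (2 * Real.pi * Complex.I * k * j / m) = ζ ^ (k * j) := by
    rw [← Complex.exp_int_mul]
    push_cast
    ring_nf
  have hmode_neg (k : ℤ) (j : ℕ) :
      Complex.exp (-(2 * Real.pi * Complex.I * k * j) / m) = ζ ^ (-(k * j)) := by
    rw [← Complex.exp_int_mul]
    push_cast
    ring_nf
  have hhat (k : ℤ) : ψhatstar k = ∑ i ∈ range m, ψstar i * ζ ^ (-(k * i)) := by
    simp only [hhatstar, hmode_neg]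
  have hlinear (j : ℕ) : ψss j = (1 / m : ℂ) * ∑ k ∈ Ico (-(m : ℤ) / 2) (-(m : ℤ) / 2 + m),
      Complex.exp (-((Complex.I / β) * ((|μ k| ^ α : ℝ) : ℂ) * τ)) *
        (∑ i ∈ range m, ψstar i * ζ ^ (-(k * i))) * ζ ^ (k * j) := by
    simp only [hss, hK, hhat, hmode]
  have hunimodular (k : ℤ) : ‖Complex.exp (-((Complex.I / β) * ((|μ k| ^ α : ℝ) : ℂ) * τ))‖ = 1 := by
    simp [Complex.norm_exp]
  calc ∑ j ∈ range m, ‖ψnew j‖ ^ 2 = ∑ j ∈ range m, ‖ψss j‖ ^ 2 := by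
        simp [hnew, Complex.norm_exp_I_mul_ofReal]
    _ = ∑ j ∈ range m, ‖ψstar j‖ ^ 2 := by
        simp_rw [hlinear]
        exact (Complex.isPrimitiveRoot_exp m hm.ne').sum_norm_sq_fourierMultiplier hm.ne' _ _
          hunimodular ψstar
    _ = ∑ j ∈ range m, ‖ψ j‖ ^ 2 := by
        simp [hstar, Complex.norm_exp_I_mul_ofReal]

/-- **ℓ²-conservation of one Strang-split TSFS step (case η = 0, β ≠ 0).**
The nonlinear half-steps are modeled by arbitrary real phases `θ, θ'`, and the linear
step multiplies Fourier mode `k` by `exp(−(i/β)·|μ_k|^α·τ)` with `μ_k = 2πk/(b−a)`.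
One step of the scheme conserves the discrete ℓ²-norm. -/
theorem tsfs_strang_step_l2_conservative
    (m : ℕ) (hm : 0 < m) (hme : Even m)
    (β τ α a b : ℝ) (hβ : β ≠ 0) (hα1 : 1 < α) (hα2 : α ≤ 2) (hab : a < b)
    (μ : ℤ → ℝ) (hμ : ∀ k : ℤ, μ k = 2 * Real.pi * (k : ℝ) / (b - a))
    (θ θ' : ℕ → ℝ) (ψ ψstar ψss ψnew : ℕ → ℂ) (ψhatstar : ℤ → ℂ)
    (hstar : ∀ j : ℕ, ψstar j = Complex.exp (Complex.I * (θ j : ℂ)) * ψ j)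
    (hhatstar : ∀ k : ℤ, ψhatstar k =
      ∑ j ∈ Finset.range m, ψstar j *
        Complex.exp (-(2 * (Real.pi : ℂ) * Complex.I * (k : ℂ) * (j : ℂ)) / (m : ℂ)))
    (hss : ∀ j : ℕ, ψss j = (1 / (m : ℂ)) *
      ∑ k ∈ Finset.Icc (-(m : ℤ) / 2) ((m : ℤ) / 2 - 1),
        Complex.exp (-((Complex.I / (β : ℂ)) * ((|μ k| ^ α : ℝ) : ℂ) * (τ : ℂ))) *
          ψhatstar k * Complex.exp (2 * (Real.pi : ℂ) * Complex.I * (k : ℂ) * (j : ℂ) / (m : ℂ)))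
    (hnew : ∀ j : ℕ, ψnew j = Complex.exp (Complex.I * (θ' j : ℂ)) * ψss j) :
    ∑ j ∈ Finset.range m, ‖ψnew j‖ ^ 2
      = ∑ j ∈ Finset.range m, ‖ψ j‖ ^ 2 :=
  tsfs_strang_step_l2_conservative_general m hm β τ α μ θ θ' ψ ψstar ψss ψnew ψhatstar hstar
    hhatstar hss hnew
end

section
/- Let α be a real number with 1 < α ≤ 2 and for j ∈ ℤ define the fractional centered difference coefficient g_j(α) = (−1)^j · Γ(α+1) · (1/Γ(α/2 − j + 1)) · (1/Γ(α/2 + j + 1)). Then g_0(α) = Γ(α+1)/Γ(α/2+1)² > 0, and g_j(α) ≤ 0 for every integer j with j ≥ 1. -/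
/-- `1/Γ(x) = x / Γ(x+1)`, valid everywhere with junk-value conventions. -/
lemma one_div_Gamma_eq (x : ℝ) : 1 / Real.Gamma x = x / Real.Gamma (x + 1) := by
  rcases eq_or_ne x 0 with h | h
  · simp [h, Real.Gamma_zero]
  · rw [Real.Gamma_add_one h]
    rcases eq_or_ne (Real.Gamma x) 0 with h2 | h2
    · simp [h2]
    · field_simp

lemma one_div_Gamma_prod (α : ℝ) (n : ℕ) :
    1 / Real.Gamma (α / 2 - (n : ℝ) + 1) =
      (∏ i ∈ Finset.range n, (α / 2 - (i : ℝ))) * (1 / Real.Gamma (α / 2 + 1)) := by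
  induction n with
  | zero => simp
  | succ n ih =>
    have h1 : α / 2 - ((n : ℝ) + 1) + 1 = α / 2 - (n : ℝ) := by ring
    rw [Nat.cast_succ, h1, one_div_Gamma_eq (α / 2 - (n : ℝ))]
    have h2 : α / 2 - (n : ℝ) + 1 = α / 2 - (n : ℝ) + 1 := rfl
    rw [Finset.prod_range_succ]
    have : (α / 2 - (n : ℝ)) / Real.Gamma (α / 2 - (n : ℝ) + 1) =
        (α / 2 - (n : ℝ)) * (1 / Real.Gamma (α / 2 - (n : ℝ) + 1)) := by ring
    rw [this, ih]
    ring

lemma sign_prod (α : ℝ) (hα1 : 1 < α) (hα2 : α ≤ 2) (n : ℕ) (hn : 1 ≤ n) :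
    (-1 : ℝ) ^ n * (∏ i ∈ Finset.range n, (α / 2 - (i : ℝ))) ≤ 0 := by
  induction n with
  | zero => omega
  | succ n ih =>
    rcases Nat.eq_or_lt_of_le hn with h | h
    · have : n = 0 := by omega
      subst this
      simp
      linarith
    · have hn' : 1 ≤ n := by omega
      have h1 := ih hn'
      rw [Finset.prod_range_succ, pow_succ]
      have hfac : α / 2 - (n : ℝ) ≤ 0 := by
        have : (1 : ℝ) ≤ (n : ℝ) := by exact_mod_cast hn'
        nlinarith
      nlinarith [h1, hfac]

/-- **Sign pattern of the fractional centered difference coefficients.**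
For `1 < α ≤ 2` and `g_j(α) = (−1)^j Γ(α+1) (1/Γ(α/2 − j + 1)) (1/Γ(α/2 + j + 1))`,
one has `g_0(α) = Γ(α+1)/Γ(α/2+1)² > 0` and `g_j(α) ≤ 0` for every integer `j ≥ 1`. -/
theorem fcd_coefficients_sign
    (α : ℝ) (hα1 : 1 < α) (hα2 : α ≤ 2) (g : ℤ → ℝ)
    (hg : ∀ j : ℤ, g j = (-1 : ℝ) ^ j * Real.Gamma (α + 1) *
      (1 / Real.Gamma (α / 2 - (j : ℝ) + 1)) * (1 / Real.Gamma (α / 2 + (j : ℝ) + 1))) :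
    g 0 = Real.Gamma (α + 1) / Real.Gamma (α / 2 + 1) ^ 2 ∧
      0 < g 0 ∧ ∀ j : ℤ, 1 ≤ j → g j ≤ 0 := by
  have hG1 : 0 < Real.Gamma (α + 1) := Real.Gamma_pos_of_pos (by linarith)
  have hG2 : 0 < Real.Gamma (α / 2 + 1) := Real.Gamma_pos_of_pos (by linarith)
  have hg0 : g 0 = Real.Gamma (α + 1) / Real.Gamma (α / 2 + 1) ^ 2 := by
    have h0 : g 0 = (1:ℝ) * Real.Gamma (α + 1) *
        (1 / Real.Gamma (α / 2 + 1)) * (1 / Real.Gamma (α / 2 + 1)) := by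
      rw [hg 0]; norm_num
    rw [h0, one_mul, one_div, mul_assoc, ← mul_inv, ← sq, ← div_eq_mul_inv]
  refine ⟨hg0, ?_, ?_⟩
  · rw [hg0]; positivity
  · intro j hj
    obtain ⟨n, rfl⟩ := Int.eq_ofNat_of_zero_le (by omega : (0:ℤ) ≤ j)
    have hn : 1 ≤ n := by exact_mod_cast hj
    rw [hg]
    have hz : ((-1 : ℝ)) ^ ((n : ℤ)) = (-1 : ℝ) ^ n := zpow_natCast _ _
    push_cast
    rw [hz, one_div_Gamma_prod α n]
    have hG3 : 0 < Real.Gamma (α / 2 + (n : ℝ) + 1) :=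
      Real.Gamma_pos_of_pos (by positivity)
    have hs := sign_prod α hα1 hα2 n hn
    have hrw : (-1:ℝ) ^ n * Real.Gamma (α + 1) *
        ((∏ i ∈ Finset.range n, (α / 2 - (i : ℝ))) * (1 / Real.Gamma (α / 2 + 1))) *
        (1 / Real.Gamma (α / 2 + (n : ℝ) + 1)) =
        ((-1:ℝ) ^ n * ∏ i ∈ Finset.range n, (α / 2 - (i : ℝ))) *
        (Real.Gamma (α + 1) * (1 / Real.Gamma (α / 2 + 1)) *
          (1 / Real.Gamma (α / 2 + (n : ℝ) + 1))) := by ring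
    rw [hrw]
    apply mul_nonpos_of_nonpos_of_nonneg hs
    positivity
end

section
/- Let α be a real number with 1 < α ≤ 2 and for j ∈ ℤ define the fractional centered difference coefficient g_j(α) = (−1)^j · Γ(α+1) · (1/Γ(α/2 − j + 1)) · (1/Γ(α/2 + j + 1)). Then the family (g_j(α))_{j∈ℤ} is absolutely summable and Σ_{j∈ℤ} g_j(α) = 0. -/
open Real Filter Finset Topology

private lemma recGamma (x : ℝ) : 1 / Real.Gamma x = x * (1 / Real.Gamma (x + 1)) := by
  rcases eq_or_ne x 0 with h | h
  · simp [h, Real.Gamma_zero]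
  · rw [Real.Gamma_add_one h]
    rcases eq_or_ne (Real.Gamma x) 0 with h2 | h2
    · simp [h2]
    · field_simp

private lemma neg_one_zpow_self (k : ℤ) : ((-1 : ℝ) ^ k)⁻¹ = (-1 : ℝ) ^ k := by
  rcases Int.even_or_odd k with h | h
  · rw [h.neg_one_zpow]; norm_num
  · rw [h.neg_one_zpow]; norm_num

private noncomputable def Hfun (a : ℝ) (j : ℤ) : ℝ :=
  (-1 : ℝ) ^ j * (1 / Real.Gamma (a - j)) * (1 / Real.Gamma (a + j + 1))

private lemma Htel (a : ℝ) (j : ℤ) :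
    Hfun a j - Hfun a (j - 1) =
      (2 * a) * ((-1 : ℝ) ^ j * (1 / Real.Gamma (a - j + 1)) * (1 / Real.Gamma (a + j + 1))) := by
  have hz : (-1 : ℝ) ^ (j - 1) = -((-1 : ℝ) ^ j) := by
    rw [zpow_sub₀ (by norm_num : (-1:ℝ) ≠ 0), zpow_one]
    ring
  have e1 : 1 / Real.Gamma (a - j) = (a - j) * (1 / Real.Gamma (a - j + 1)) := recGamma (a - j)
  have e2 : 1 / Real.Gamma (a + j) = (a + j) * (1 / Real.Gamma (a + j + 1)) := recGamma (a + j)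
  have c1 : ((j - 1 : ℤ) : ℝ) = (j : ℝ) - 1 := by push_cast; ring
  have a1 : a - ((j : ℝ) - 1) = a - j + 1 := by ring
  have a2 : a + ((j : ℝ) - 1) + 1 = a + j := by ring
  simp only [Hfun, c1, a1, a2, hz, e1, e2]
  ring

private lemma Hsym (a : ℝ) (j : ℤ) : Hfun a (-j - 1) = -Hfun a j := by
  have hz : (-1 : ℝ) ^ (-j - 1) = -((-1 : ℝ) ^ j) := by
    rw [zpow_sub₀ (by norm_num : (-1:ℝ) ≠ 0), zpow_one, zpow_neg, neg_one_zpow_self]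
    ring
  have c1 : ((-j - 1 : ℤ) : ℝ) = -(j : ℝ) - 1 := by push_cast; ring
  have a1 : a - (-(j : ℝ) - 1) = a + j + 1 := by ring
  have a2 : a + (-(j : ℝ) - 1) + 1 = a - j := by ring
  simp only [Hfun, c1, a1, a2, hz]
  ring

private lemma Hrec (a : ℝ) (ha : 0 < a) (n : ℕ) :
    Hfun a ((n : ℤ) + 1) = (((n : ℝ) + 1 - a) / ((n : ℝ) + 1 + a)) * Hfun a n := by
  have hpos : (0 : ℝ) < a + n + 1 := by positivity
  have e1 : 1 / Real.Gamma (a - ((n : ℝ) + 1)) =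
      (a - ((n : ℝ) + 1)) * (1 / Real.Gamma (a - ((n : ℝ) + 1) + 1)) :=
    recGamma _
  have e2 : 1 / Real.Gamma (a + (n : ℝ) + 1) =
      (a + (n : ℝ) + 1) * (1 / Real.Gamma (a + (n : ℝ) + 1 + 1)) := recGamma _
  have hz : (-1 : ℝ) ^ ((n : ℤ) + 1) = -((-1 : ℝ) ^ (n : ℤ)) := by
    rw [zpow_add₀ (by norm_num : (-1:ℝ) ≠ 0), zpow_one]; ring
  have c1 : (((n : ℤ) + 1 : ℤ) : ℝ) = (n : ℝ) + 1 := by push_cast; ring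
  have c2 : (((n : ℤ) : ℤ) : ℝ) = (n : ℝ) := by push_cast; ring
  have a1 : a - ((n : ℝ) + 1) + 1 = a - (n : ℝ) := by ring
  have a2 : a + ((n : ℝ) + 1) + 1 = a + (n : ℝ) + 1 + 1 := by ring
  simp only [Hfun, c1, c2, hz, a2]
  rw [show a - ((n:ℝ)+1) = a - (n:ℝ) - 1 by ring] at e1 ⊢
  rw [e1]
  rw [show a - (n:ℝ) - 1 + 1 = a - (n:ℝ) by ring] at e1 ⊢
  -- now express 1/Γ(a+n+1+1) in terms of 1/Γ(a+n+1)
  have e2' : 1 / Real.Gamma (a + (n : ℝ) + 1 + 1) =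
      (1 / Real.Gamma (a + (n : ℝ) + 1)) / (a + (n : ℝ) + 1) := by
    rw [e2]; field_simp
  rw [e2']
  field_simp
  ring

private lemma Hnonneg (a : ℝ) (ha : 0 < a) (ha2 : a ≤ 1) (n : ℕ) : 0 ≤ Hfun a n := by
  induction n with
  | zero =>
      simp only [Hfun, Int.cast_zero, Int.cast_natCast, Nat.cast_zero, zpow_zero, one_mul,
        sub_zero, add_zero, zero_add]
      have h1 : 0 < Real.Gamma a := Real.Gamma_pos_of_pos ha
      have h2 : 0 < Real.Gamma (a + 1) := Real.Gamma_pos_of_pos (by linarith)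
      exact mul_nonneg (one_div_nonneg.mpr h1.le) (one_div_nonneg.mpr h2.le)
  | succ n ih =>
      have : ((n + 1 : ℕ) : ℤ) = (n : ℤ) + 1 := by push_cast; ring
      rw [this, Hrec a ha n]
      have h1 : (0:ℝ) ≤ (n : ℝ) + 1 - a := by
        have : (0:ℝ) ≤ (n:ℝ) := Nat.cast_nonneg n
        linarith
      have h2 : (0:ℝ) < (n : ℝ) + 1 + a := by positivity
      exact mul_nonneg (div_nonneg h1 h2.le) ih

private lemma Hbound (a : ℝ) (ha : 1/2 < a) (ha2 : a ≤ 1) (n : ℕ) :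
    ((n : ℝ) + 1) * (Hfun a n) ^ 2 ≤ (Hfun a 0) ^ 2 := by
  have ha0 : 0 < a := by linarith
  induction n with
  | zero => simp
  | succ n ih =>
      have hcast : ((n + 1 : ℕ) : ℤ) = (n : ℤ) + 1 := by push_cast; ring
      rw [hcast, Hrec a ha0 n]
      have hn : (0:ℝ) ≤ (n:ℝ) := Nat.cast_nonneg n
      have hden : (0:ℝ) < (n : ℝ) + 1 + a := by positivity
      have key : ((n : ℝ) + 1 + 1) * (((n : ℝ) + 1 - a) / ((n : ℝ) + 1 + a)) ^ 2 ≤ (n : ℝ) + 1 := by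
        rw [div_pow, mul_div_assoc', div_le_iff₀ (by positivity)]
        nlinarith [sq_nonneg ((n:ℝ) + 1 - a), sq_nonneg a]
      calc (((n + 1 : ℕ) : ℝ) + 1) * ((((n : ℝ) + 1 - a) / ((n : ℝ) + 1 + a)) * Hfun a n) ^ 2
          = (((n : ℝ) + 1 + 1) * (((n : ℝ) + 1 - a) / ((n : ℝ) + 1 + a)) ^ 2) * (Hfun a n) ^ 2 := by
            push_cast; ring
        _ ≤ (((n : ℝ) + 1)) * (Hfun a n) ^ 2 := by
            exact mul_le_mul_of_nonneg_right key (sq_nonneg _)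
        _ ≤ (Hfun a 0) ^ 2 := ih

private lemma Htendsto (a : ℝ) (ha : 1/2 < a) (ha2 : a ≤ 1) :
    Tendsto (fun n : ℕ => Hfun a (n : ℤ)) atTop (𝓝 0) := by
  have ha0 : (0:ℝ) < a := by linarith
  have hup : Tendsto (fun n : ℕ => (Hfun a 0) ^ 2 / ((n : ℝ) + 1)) atTop (𝓝 0) := by
    have h1 : Tendsto (fun n : ℕ => ((n : ℝ) + 1)) atTop atTop :=
      tendsto_atTop_add_const_right atTop 1 tendsto_natCast_atTop_atTop
    simpa [div_eq_mul_inv] using h1.inv_tendsto_atTop.const_mul ((Hfun a 0) ^ 2)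
  have hsq : Tendsto (fun n : ℕ => (Hfun a (n : ℤ)) ^ 2) atTop (𝓝 0) := by
    apply tendsto_of_tendsto_of_tendsto_of_le_of_le tendsto_const_nhds hup
    · intro n; positivity
    · intro n
      show (Hfun a (n : ℤ)) ^ 2 ≤ (Hfun a 0) ^ 2 / ((n : ℝ) + 1)
      have hb := Hbound a ha ha2 n
      have hpos : (0:ℝ) < (n : ℝ) + 1 := by positivity
      rw [le_div_iff₀ hpos]
      nlinarith [hb]
  have := (Real.continuous_sqrt.tendsto 0).comp hsq
  simp only [Function.comp, Real.sqrt_zero] at this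
  refine this.congr fun n => ?_
  exact Real.sqrt_sq (Hnonneg a ha0 ha2 n)

private noncomputable def dfun (a : ℝ) (n : ℕ) : ℝ :=
  (-1 : ℝ) ^ n * (1 / Real.Gamma (a - n + 1)) * (1 / Real.Gamma (a + n + 1))

private lemma drec (a : ℝ) (ha : 0 < a) (n : ℕ) :
    dfun a (n + 1) = (((n : ℝ) - a) / ((n : ℝ) + 1 + a)) * dfun a n := by
  have hpos : (0:ℝ) < a + n + 1 := by positivity
  have e1 : 1 / Real.Gamma (a - n) = (a - n) * (1 / Real.Gamma (a - n + 1)) := recGamma _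
  have e2 : 1 / Real.Gamma (a + (n : ℝ) + 1) =
      (a + (n : ℝ) + 1) * (1 / Real.Gamma (a + (n : ℝ) + 1 + 1)) := recGamma _
  have e2' : 1 / Real.Gamma (a + (n : ℝ) + 1 + 1) =
      (1 / Real.Gamma (a + (n : ℝ) + 1)) / (a + (n : ℝ) + 1) := by
    rw [e2]; field_simp
  have a1 : a - ((n : ℝ) + 1) + 1 = a - n := by ring
  have a2 : a + ((n : ℝ) + 1) + 1 = a + (n : ℝ) + 1 + 1 := by ring
  simp only [dfun, Nat.cast_add, Nat.cast_one, a1, a2, pow_succ, e1, e2']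
  field_simp
  ring

private lemma d0nonneg (a : ℝ) (ha : 0 < a) : 0 ≤ dfun a 0 := by
  simp only [dfun, Nat.cast_zero, pow_zero, one_mul, sub_zero, add_zero, zero_add]
  have h1 : 0 < Real.Gamma (a + 1) := Real.Gamma_pos_of_pos (by linarith)
  have h2 : 0 ≤ 1 / Real.Gamma (a + 1) := by positivity
  nlinarith

private lemma dsign (a : ℝ) (ha : 0 < a) (ha2 : a ≤ 1) (n : ℕ) : dfun a (n + 1) ≤ 0 := by
  induction n with
  | zero =>
      rw [drec a ha 0]
      have h1 : ((0:ℕ) : ℝ) - a ≤ 0 := by simp; linarith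
      have h2 : (0:ℝ) < ((0:ℕ):ℝ) + 1 + a := by positivity
      exact mul_nonpos_of_nonpos_of_nonneg (div_nonpos_of_nonpos_of_nonneg h1 h2.le)
        (d0nonneg a ha)
  | succ n ih =>
      rw [drec a ha (n + 1)]
      have h1 : (0:ℝ) ≤ ((n + 1 : ℕ) : ℝ) - a := by push_cast; linarith [Nat.cast_nonneg (α := ℝ) n]
      have h2 : (0:ℝ) < ((n + 1 : ℕ) : ℝ) + 1 + a := by positivity
      exact mul_nonpos_of_nonneg_of_nonpos (div_nonneg h1 h2.le) ih

private lemma tele (F : ℤ → ℝ) (N : ℕ) :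
    ∑ j ∈ Finset.Icc (-(N : ℤ)) (N : ℤ), (F j - F (j - 1)) = F N - F (-(N : ℤ) - 1) := by
  induction N with
  | zero => simp
  | succ N ih =>
      have hset : Finset.Icc (-((N + 1 : ℕ) : ℤ)) ((N + 1 : ℕ) : ℤ) =
          insert (-(N : ℤ) - 1) (insert ((N : ℤ) + 1) (Finset.Icc (-(N : ℤ)) (N : ℤ))) := by
        ext x
        simp only [Finset.mem_Icc, Finset.mem_insert]
        omega
      have h1 : ((N : ℤ) + 1) ∉ Finset.Icc (-(N : ℤ)) (N : ℤ) := by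
        simp only [Finset.mem_Icc]; omega
      have h2 : (-(N : ℤ) - 1) ∉ insert ((N : ℤ) + 1) (Finset.Icc (-(N : ℤ)) (N : ℤ)) := by
        simp only [Finset.mem_insert, Finset.mem_Icc]; omega
      rw [hset, Finset.sum_insert h2, Finset.sum_insert h1, ih]
      have e1 : (-(N : ℤ) - 1 - 1) = -((N + 1 : ℕ) : ℤ) - 1 := by push_cast; ring
      have e2 : ((N : ℤ) + 1 - 1) = (N : ℤ) := by ring
      have e3 : ((N : ℤ) + 1) = ((N + 1 : ℕ) : ℤ) := by push_cast; ring
      rw [e1, e2, e3]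
      ring

/-- **The fractional centered difference coefficients are absolutely summable with sum 0.**
For `1 < α ≤ 2` and `g_j(α) = (−1)^j Γ(α+1) (1/Γ(α/2 − j + 1)) (1/Γ(α/2 + j + 1))`,
the family `(g_j(α))_{j∈ℤ}` is absolutely summable and `Σ_{j∈ℤ} g_j(α) = 0`. -/
theorem fcd_coefficients_sum_zero
    (α : ℝ) (hα1 : 1 < α) (hα2 : α ≤ 2) (g : ℤ → ℝ)
    (hg : ∀ j : ℤ, g j = (-1 : ℝ) ^ j * Real.Gamma (α + 1) *
      (1 / Real.Gamma (α / 2 - (j : ℝ) + 1)) * (1 / Real.Gamma (α / 2 + (j : ℝ) + 1))) :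
    Summable (fun j : ℤ => |g j|) ∧ ∑' j : ℤ, g j = 0 := by
  have hα0 : (0:ℝ) < α := by linarith
  set a := α / 2 with ha
  have ha1 : 1/2 < a := by rw [ha]; linarith
  have ha2 : a ≤ 1 := by rw [ha]; linarith
  have ha0 : (0:ℝ) < a := by linarith
  have hGpos : 0 < Real.Gamma (α + 1) := Real.Gamma_pos_of_pos (by linarith)
  set K := Real.Gamma (α + 1) / α with hKdef
  have hKpos : 0 < K := div_pos hGpos hα0
  -- telescoping representation
  have hgj : ∀ j : ℤ, g j = K * (Hfun a j - Hfun a (j - 1)) := by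
    intro j
    rw [hg j, Htel a j, show 2 * a = α by rw [ha]; ring]
    have hK : K * α = Real.Gamma (α + 1) := by
      rw [hKdef]; field_simp
    calc (-1:ℝ) ^ j * Real.Gamma (α + 1) * (1 / Real.Gamma (a - j + 1)) *
          (1 / Real.Gamma (a + j + 1))
        = (K * α) * ((-1:ℝ) ^ j * (1 / Real.Gamma (a - j + 1)) *
            (1 / Real.Gamma (a + j + 1))) := by rw [hK]; ring
      _ = K * (α * ((-1:ℝ) ^ j * (1 / Real.Gamma (a - j + 1)) *
            (1 / Real.Gamma (a + j + 1)))) := by ring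
  -- Icc sums telescope
  have hIccSum : ∀ N : ℕ, ∑ j ∈ Finset.Icc (-(N : ℤ)) (N : ℤ), g j = K * (2 * Hfun a N) := by
    intro N
    have h1 : ∑ j ∈ Finset.Icc (-(N : ℤ)) (N : ℤ), g j
        = ∑ j ∈ Finset.Icc (-(N : ℤ)) (N : ℤ), K * (Hfun a j - Hfun a (j - 1)) :=
      Finset.sum_congr rfl fun j _ => hgj j
    rw [h1, ← Finset.mul_sum, tele (Hfun a) N]
    have h2 : Hfun a (-(N : ℤ) - 1) = -Hfun a N := Hsym a (N : ℤ)
    rw [h2]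
    ring
  -- relation to dfun
  have hgd : ∀ n : ℕ, g (n : ℤ) = Real.Gamma (α + 1) * dfun a n := by
    intro n
    rw [hg (n : ℤ)]
    simp only [dfun, Int.cast_natCast, zpow_natCast]
    ring
  have hgdneg : ∀ n : ℕ, g (-(n : ℤ)) = Real.Gamma (α + 1) * dfun a n := by
    intro n
    rw [hg (-(n : ℤ))]
    have hz : (-1 : ℝ) ^ (-(n : ℤ)) = (-1 : ℝ) ^ n := by
      rw [zpow_neg, neg_one_zpow_self, zpow_natCast]
    have c1 : ((-(n : ℤ) : ℤ) : ℝ) = -(n : ℝ) := by push_cast; ring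
    have a1 : a - (-(n : ℝ)) + 1 = a + n + 1 := by ring
    have a2 : a + (-(n : ℝ)) + 1 = a - n + 1 := by ring
    rw [c1, a1, a2, hz]
    simp only [dfun]
    ring
  have hgle : ∀ j : ℤ, j ≠ 0 → g j ≤ 0 := by
    intro j hj
    have hd : ∀ n : ℕ, dfun a (n + 1) ≤ 0 := dsign a ha0 ha2
    rcases Int.natAbs_eq j with h | h
    · obtain ⟨m, hm⟩ : ∃ m : ℕ, j.natAbs = m + 1 := by
        refine ⟨j.natAbs - 1, ?_⟩; omega
      rw [h, hm, hgd (m + 1)]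
      exact mul_nonpos_of_nonneg_of_nonpos hGpos.le (hd m)
    · obtain ⟨m, hm⟩ : ∃ m : ℕ, j.natAbs = m + 1 := by
        refine ⟨j.natAbs - 1, ?_⟩; omega
      rw [h, hm, hgdneg (m + 1)]
      exact mul_nonpos_of_nonneg_of_nonpos hGpos.le (hd m)
  have hg0 : 0 ≤ g 0 := by
    have h := hgd 0
    rw [Nat.cast_zero] at h
    rw [h]
    exact mul_nonneg hGpos.le (d0nonneg a ha0)
  have habs : ∀ j : ℤ, |g j| = (if j = 0 then 2 * g 0 else 0) - g j := by
    intro j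
    by_cases h : j = 0
    · subst h; rw [abs_of_nonneg hg0]; simp; ring
    · rw [abs_of_nonpos (hgle j h)]; simp [h]
  -- summability
  have hsum : Summable (fun j : ℤ => |g j|) := by
    apply summable_of_sum_le (c := 2 * g 0) (fun j => abs_nonneg _)
    intro u
    set N := u.sup (fun j => j.natAbs) with hN
    have hsub : u ⊆ Finset.Icc (-(N : ℤ)) (N : ℤ) := by
      intro j hj
      have h1 : j.natAbs ≤ N := Finset.le_sup (f := fun j => j.natAbs) hj
      simp only [Finset.mem_Icc]
      omega
    have hmem0 : (0 : ℤ) ∈ Finset.Icc (-(N : ℤ)) (N : ℤ) := by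
      simp only [Finset.mem_Icc]; omega
    calc ∑ j ∈ u, |g j| ≤ ∑ j ∈ Finset.Icc (-(N : ℤ)) (N : ℤ), |g j| :=
          Finset.sum_le_sum_of_subset_of_nonneg hsub (fun _ _ _ => abs_nonneg _)
      _ = (∑ j ∈ Finset.Icc (-(N : ℤ)) (N : ℤ), (if j = 0 then 2 * g 0 else 0))
            - ∑ j ∈ Finset.Icc (-(N : ℤ)) (N : ℤ), g j := by
          rw [← Finset.sum_sub_distrib]
          exact Finset.sum_congr rfl fun j _ => habs j
      _ = 2 * g 0 - K * (2 * Hfun a N) := by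
          rw [hIccSum N, Finset.sum_ite_eq' _ (0 : ℤ) (fun _ => 2 * g 0), if_pos hmem0]
      _ ≤ 2 * g 0 := by
          nlinarith [Hnonneg a ha0 ha2 N, hKpos]
  refine ⟨hsum, ?_⟩
  have hsg : Summable g := Summable.of_abs hsum
  have hmono : Tendsto (fun N : ℕ => Finset.Icc (-(N : ℤ)) (N : ℤ)) atTop atTop := by
    apply tendsto_atTop_finset_of_monotone
    · intro m n hmn
      apply Finset.Icc_subset_Icc <;> omega
    · intro j
      exact ⟨j.natAbs, by simp only [Finset.mem_Icc]; omega⟩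
  have h1 : Tendsto (fun N : ℕ => ∑ j ∈ Finset.Icc (-(N : ℤ)) (N : ℤ), g j)
      atTop (𝓝 (∑' j, g j)) := hsg.hasSum.comp hmono
  have h2 : Tendsto (fun N : ℕ => ∑ j ∈ Finset.Icc (-(N : ℤ)) (N : ℤ), g j)
      atTop (𝓝 0) := by
    have h3 := (Htendsto a ha1 ha2).const_mul (2 * K)
    rw [mul_zero] at h3
    refine h3.congr fun N => ?_
    rw [hIccSum N]
    ring
  exact tendsto_nhds_unique h1 h2
end

section
/- Let β ≠ 0 and ε ≠ 0 be real numbers, let V ∈ ℝ, and let ψ₀ ∈ ℂ. Define ψ : ℝ → ℂ by ψ(t) = exp(i·(V − |ψ₀|²)·t/(β·ε²)) · ψ₀. Then ψ(0) = ψ₀, |ψ(t)| = |ψ₀| for all t ∈ ℝ, and ψ is differentiable with −i·β·ψ′(t) = (1/ε²)·(V − |ψ(t)|²)·ψ(t) for all t ∈ ℝ. -/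
/-!
With `ω = (V - |ψ₀|²) / (β ε²)` real, `ψ` is the phase rotation `t ↦ exp (i ω t) ψ₀`, so `|ψ t| = |ψ₀|`
and the nonlinear coefficient `V - |ψ t|²` is frozen at `V - |ψ₀|²`. Then `ψ' = i ω ψ`, and
`-i β ψ' = β ω ψ = (V - |ψ₀|²) ψ / ε²`.
-/

open Complex

noncomputable def phaseRotation (ω : ℝ) (z : ℂ) (t : ℝ) : ℂ :=
  exp (I * ω * t) * z

namespace phaseRotation

variable (ω : ℝ) (z : ℂ)

theorem apply_zero : phaseRotation ω z 0 = z := by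
  simp [phaseRotation]

theorem norm_apply (t : ℝ) : ‖phaseRotation ω z t‖ = ‖z‖ := by
  have h : I * ω * t = ((ω * t : ℝ) : ℂ) * I := by push_cast; ring
  rw [phaseRotation, norm_mul, h, norm_exp_ofReal_mul_I, one_mul]

theorem hasDerivAt (t : ℝ) :
    HasDerivAt (phaseRotation ω z) (I * ω * phaseRotation ω z t) t := by
  have hlin : HasDerivAt (fun s : ℝ => I * ω * (s : ℂ)) (I * ω) t := by
    simpa using (ofRealCLM.hasDerivAt (x := t)).const_mul (I * ω)
  exact (hlin.cexp.mul_const z).congr_deriv (by unfold phaseRotation; ring)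

end phaseRotation

theorem nonlinear_substep_exact_solution_general
    (β ε V : ℝ) (hβ : β ≠ 0) (ψ₀ : ℂ) (ψ : ℝ → ℂ)
    (hψ : ∀ t : ℝ, ψ t =
      Complex.exp (Complex.I * ((V : ℂ) - (‖ψ₀‖ : ℂ) ^ 2) * (t : ℂ) /
        ((β : ℂ) * (ε : ℂ) ^ 2)) * ψ₀) :
    ψ 0 = ψ₀ ∧
    (∀ t : ℝ, ‖ψ t‖ = ‖ψ₀‖) ∧
    (∀ t : ℝ, DifferentiableAt ℝ ψ t) ∧
    (∀ t : ℝ, -(Complex.I * (β : ℂ)) * deriv ψ t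
      = (1 / (ε : ℂ) ^ 2) * ((V : ℂ) - (‖ψ t‖ : ℂ) ^ 2) * ψ t) := by
  set ω : ℝ := (V - ‖ψ₀‖ ^ 2) / (β * ε ^ 2)
  have hψω : ψ = phaseRotation ω ψ₀ := by
    funext t
    rw [hψ t, phaseRotation]
    simp only [ω]
    push_cast
    ring_nf
  subst hψω
  refine ⟨phaseRotation.apply_zero ω ψ₀, phaseRotation.norm_apply ω ψ₀,
    fun t => (phaseRotation.hasDerivAt ω ψ₀ t).differentiableAt, fun t => ?_⟩
  rw [(phaseRotation.hasDerivAt ω ψ₀ t).deriv, phaseRotation.norm_apply]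
  have hβ' : (β : ℂ) ≠ 0 := by exact_mod_cast hβ
  calc -(I * β) * (I * ω * phaseRotation ω ψ₀ t)
      = -(I * I) * (β * ω) * phaseRotation ω ψ₀ t := by ring
    _ = (1 / (ε : ℂ) ^ 2) * ((V : ℂ) - (‖ψ₀‖ : ℂ) ^ 2) * phaseRotation ω ψ₀ t := by
      simp only [I_mul_I, ω]
      push_cast
      field_simp

/-- **Exact solution of the nonlinear substep (case η = 0, β ≠ 0).**
For `β ≠ 0`, `ε ≠ 0`, `V ∈ ℝ`, `ψ₀ ∈ ℂ` and
`ψ(t) = exp(i (V − |ψ₀|²) t / (β ε²)) ψ₀`, one has `ψ(0) = ψ₀`, `|ψ(t)| = |ψ₀|`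
for all `t`, and `ψ` is differentiable with
`−iβ ψ′(t) = (1/ε²)(V − |ψ(t)|²) ψ(t)` for all `t`. -/
theorem nonlinear_substep_exact_solution
    (β ε V : ℝ) (hβ : β ≠ 0) (hε : ε ≠ 0) (ψ₀ : ℂ) (ψ : ℝ → ℂ)
    (hψ : ∀ t : ℝ, ψ t =
      Complex.exp (Complex.I * ((V : ℂ) - (‖ψ₀‖ : ℂ) ^ 2) * (t : ℂ) /
        ((β : ℂ) * (ε : ℂ) ^ 2)) * ψ₀) :
    ψ 0 = ψ₀ ∧
    (∀ t : ℝ, ‖ψ t‖ = ‖ψ₀‖) ∧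
    (∀ t : ℝ, DifferentiableAt ℝ ψ t) ∧
    (∀ t : ℝ, -(Complex.I * (β : ℂ)) * deriv ψ t
      = (1 / (ε : ℂ) ^ 2) * ((V : ℂ) - (‖ψ t‖ : ℂ) ^ 2) * ψ t) :=
  nonlinear_substep_exact_solution_general β ε V hβ ψ₀ ψ hψ
end
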